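/- Let p be a 1-periodic even C^∞ function with p(x)² + p(x+1/2)² = 2 vanishing on [1/7, 3/14] ∪ [3/7, 1/2] (together with all derivatives), extended evenly and periodically. Define h_{1,1}(x) = p(x) for x ∈ [-2/7, 2/7) and 0 elsewhere in [-1/2,1/2), h_{1,2}(x) = p(x + 1/2) for x ∈ [-1/7, 1/7) and 0 elsewhere, h_{2,1}(x) = √2 for x ∈ ±[3/7, 1/2) and 0 elsewhere, h_{2,2} = 0 (all extended 1-periodically). Then for all x: |h_{1,1}(x/2)|² + |h_{1,2}(x/2)|² + |h_{1,1}((x+1)/2)|² + |h_{1,2}((x+1)/2)|² = 2·χ_{S_1}(x), where S_1 is the 1-periodization of [-2/7, 2/7) ∪ ±[3/7, 1/2). -/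
import Mathlib


/-- The 1-periodization of a set `S ⊆ ℝ`. -/
def per (S : Set ℝ) : Set ℝ := {x | ∃ k : ℤ, x + k ∈ S}

/-- `h_{1,1}(x) = p(x)` for `x ∈ [-2/7, 2/7)` mod 1 and `0` otherwise. -/
noncomputable def h11 (p : ℝ → ℝ) : ℝ → ℝ :=
  Set.indicator (per (Set.Ico (-2/7) (2/7))) p

/-- `h_{1,2}(x) = p(x + 1/2)` for `x ∈ [-1/7, 1/7)` mod 1 and `0` otherwise. -/
noncomputable def h12 (p : ℝ → ℝ) : ℝ → ℝ :=
  Set.indicator (per (Set.Ico (-1/7) (1/7))) (fun x => p (x + 1/2))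

/-- `h_{2,1}(x) = √2` for `x ∈ ±[3/7, 1/2)` mod 1 and `0` otherwise. -/
noncomputable def h21 : ℝ → ℝ :=
  Set.indicator (per (Set.Ico (3/7) (1/2) ∪ Set.Ico (-1/2) (-3/7))) (fun _ => Real.sqrt 2)

lemma mem_per_of (a b y : ℝ) (k : ℤ) (h1 : a ≤ y + k) (h2 : y + k < b) :
    y ∈ per (Set.Ico a b) := ⟨k, h1, h2⟩

lemma notMem_per_Ico {a b : ℝ} (c d y : ℝ) (hy1 : c ≤ y) (hy2 : y < d)
    (hc : -1 < c) (hd : d ≤ 1) (ha : -1 < a) (hb : b ≤ 1)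
    (hm1 : b ≤ c - 1 ∨ d - 1 ≤ a) (h0 : b ≤ c ∨ d ≤ a) (h1 : b ≤ c + 1 ∨ d + 1 ≤ a) :
    y ∉ per (Set.Ico a b) := by
  rintro ⟨k, hk⟩
  rw [Set.mem_Ico] at hk
  obtain ⟨hk1, hk2⟩ := hk
  have hklb : (-2 : ℤ) < k := by
    have : (-2 : ℝ) < (k : ℝ) := by linarith
    exact_mod_cast this
  have hkub : k < 2 := by
    have : (k : ℝ) < 2 := by linarith
    exact_mod_cast this
  interval_cases k <;> push_cast at hk1 hk2 <;>
    rcases hm1 with h|h <;> rcases h0 with h'|h' <;> rcases h1 with h''|h'' <;> linarith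

lemma per_union (S T : Set ℝ) : per (S ∪ T) = per S ∪ per T := by
  ext y
  constructor
  · rintro ⟨k, hk | hk⟩
    exacts [Or.inl ⟨k, hk⟩, Or.inr ⟨k, hk⟩]
  · rintro (⟨k, hk⟩ | ⟨k, hk⟩)
    exacts [⟨k, Or.inl hk⟩, ⟨k, Or.inr hk⟩]

lemma per_add_one {S : Set ℝ} {y : ℝ} : y + 1 ∈ per S ↔ y ∈ per S := by
  constructor
  · rintro ⟨k, hk⟩
    refine ⟨k + 1, ?_⟩
    push_cast
    have e : y + ((k : ℝ) + 1) = y + 1 + k := by ring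
    rwa [e]
  · rintro ⟨k, hk⟩
    refine ⟨k - 1, ?_⟩
    push_cast
    have e : y + 1 + ((k : ℝ) - 1) = y + k := by ring
    rwa [e]

lemma indicator_per_per {S : Set ℝ} {f : ℝ → ℝ} (hf : ∀ y, f (y + 1) = f y) :
    Function.Periodic (Set.indicator (per S) f) 1 := by
  intro y
  by_cases h : y ∈ per S
  · rw [Set.indicator_of_mem (per_add_one.mpr h), Set.indicator_of_mem h, hf]
  · rw [Set.indicator_of_notMem (fun h' => h (per_add_one.mp h')),
      Set.indicator_of_notMem h]

lemma stmt8_per (p : ℝ → ℝ) (hper : ∀ x, p (x + 1) = p x) :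
    Function.Periodic (fun x : ℝ => (h11 p (x/2)) ^ 2 + (h12 p (x/2)) ^ 2 +
        (h11 p ((x+1)/2)) ^ 2 + (h12 p ((x+1)/2)) ^ 2) 1 := by
  have h11per : Function.Periodic (h11 p) 1 := indicator_per_per hper
  have h12per : Function.Periodic (h12 p) 1 := by
    refine indicator_per_per (fun y => ?_)
    show p (y + 1 + 1/2) = p (y + 1/2)
    rw [show y + 1 + 1/2 = y + 1/2 + 1 by ring, hper]
  intro y
  show h11 p ((y+1)/2) ^ 2 + h12 p ((y+1)/2) ^ 2 + h11 p ((y+1+1)/2) ^ 2 +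
      h12 p ((y+1+1)/2) ^ 2 = _
  rw [show (y+1+1)/2 = y/2 + 1 by ring, h11per (y/2), h12per (y/2)]
  ring

lemma stmt8_key (p : ℝ → ℝ)
    (hper : ∀ x, p (x + 1) = p x)
    (heven : ∀ x, p (-x) = p x)
    (hqmf : ∀ x, p x ^ 2 + p (x + 1/2) ^ 2 = 2)
    (pz : ∀ x ∈ Set.Icc (1/7 : ℝ) (3/14) ∪ Set.Icc (3/7 : ℝ) (1/2), p x = 0) :
    ∀ t : ℝ, -(1:ℝ)/2 ≤ t → t < 1/2 →
      (h11 p (t/2)) ^ 2 + (h12 p (t/2)) ^ 2 +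
        (h11 p ((t+1)/2)) ^ 2 + (h12 p ((t+1)/2)) ^ 2
      = 2 * Set.indicator
          (per (Set.Ico (-2/7) (2/7) ∪ Set.Ico (3/7) (1/2) ∪ Set.Ico (-1/2) (-3/7))) 1 t := by
  intro t ht1 ht2
  simp only [h11, h12]
  rcases lt_or_ge t (-3/7) with h | h
  · -- t ∈ [-1/2, -3/7)
    rw [Set.indicator_of_mem (mem_per_of _ _ _ 0 (by push_cast; linarith) (by push_cast; linarith))]
    rw [Set.indicator_of_notMem (notMem_per_Ico (-1/4) (-3/14) _ (by linarith) (by linarith)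
      (by norm_num) (by norm_num) (by norm_num) (by norm_num)
      (by norm_num) (by norm_num) (by norm_num))]
    rw [Set.indicator_of_mem (mem_per_of _ _ _ 0 (by push_cast; linarith) (by push_cast; linarith))]
    rw [Set.indicator_of_notMem (notMem_per_Ico (1/4) (2/7) _ (by linarith) (by linarith)
      (by norm_num) (by norm_num) (by norm_num) (by norm_num)
      (by norm_num) (by norm_num) (by norm_num))]
    rw [Set.indicator_of_mem (show t ∈ per (Set.Ico (-2/7 : ℝ) (2/7) ∪ Set.Ico (3/7 : ℝ) (1/2) ∪ Set.Ico (-1/2 : ℝ) (-3/7)) from ⟨0, Or.inr ⟨by push_cast; linarith, by push_cast; linarith⟩⟩)]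
    rw [show (t+1)/2 = t/2 + 1/2 by ring]
    simp only [Pi.one_apply]
    norm_num
    linarith [hqmf (t/2)]
  rcases lt_or_ge t (-2/7) with h2 | h2
  · -- t ∈ [-3/7, -2/7)  : everything vanishes
    rw [Set.indicator_of_mem (mem_per_of _ _ _ 0 (by push_cast; linarith) (by push_cast; linarith))]
    rw [Set.indicator_of_notMem (notMem_per_Ico (-3/14) (-1/7) _ (by linarith) (by linarith)
      (by norm_num) (by norm_num) (by norm_num) (by norm_num)
      (by norm_num) (by norm_num) (by norm_num))]
    rw [Set.indicator_of_notMem (notMem_per_Ico (2/7) (5/14) _ (by linarith) (by linarith)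
      (by norm_num) (by norm_num) (by norm_num) (by norm_num)
      (by norm_num) (by norm_num) (by norm_num))]
    rw [Set.indicator_of_notMem (notMem_per_Ico (2/7) (5/14) _ (by linarith) (by linarith)
      (by norm_num) (by norm_num) (by norm_num) (by norm_num)
      (by norm_num) (by norm_num) (by norm_num))]
    rw [Set.indicator_of_notMem ?nr]
    case nr =>
      rw [per_union, per_union]
      rintro ((hm | hm) | hm)
      · exact notMem_per_Ico (-3/7) (-2/7) _ (by linarith) (by linarith)
          (by norm_num) (by norm_num) (by norm_num) (by norm_num)
          (by norm_num) (by norm_num) (by norm_num) hm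
      · exact notMem_per_Ico (-3/7) (-2/7) _ (by linarith) (by linarith)
          (by norm_num) (by norm_num) (by norm_num) (by norm_num)
          (by norm_num) (by norm_num) (by norm_num) hm
      · exact notMem_per_Ico (-3/7) (-2/7) _ (by linarith) (by linarith)
          (by norm_num) (by norm_num) (by norm_num) (by norm_num)
          (by norm_num) (by norm_num) (by norm_num) hm
    have hp0 : p (t/2) = 0 := by
      rw [← heven (t/2)]
      exact pz _ (Or.inl ⟨by linarith, by linarith⟩)
    rw [hp0]
    norm_num
  rcases lt_or_ge t (2/7) with h3 | h3
  · -- t ∈ [-2/7, 2/7)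
    rw [Set.indicator_of_mem (mem_per_of _ _ _ 0 (by push_cast; linarith) (by push_cast; linarith))]
    rw [Set.indicator_of_mem (mem_per_of _ _ _ 0 (by push_cast; linarith) (by push_cast; linarith))]
    rw [Set.indicator_of_notMem (notMem_per_Ico (5/14) (9/14) _ (by linarith) (by linarith)
      (by norm_num) (by norm_num) (by norm_num) (by norm_num)
      (by norm_num) (by norm_num) (by norm_num))]
    rw [Set.indicator_of_notMem (notMem_per_Ico (5/14) (9/14) _ (by linarith) (by linarith)
      (by norm_num) (by norm_num) (by norm_num) (by norm_num)
      (by norm_num) (by norm_num) (by norm_num))]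
    rw [Set.indicator_of_mem (show t ∈ per (Set.Ico (-2/7 : ℝ) (2/7) ∪ Set.Ico (3/7 : ℝ) (1/2) ∪ Set.Ico (-1/2 : ℝ) (-3/7)) from ⟨0, Or.inl (Or.inl ⟨by push_cast; linarith, by push_cast; linarith⟩)⟩)]
    simp only [Pi.one_apply]
    norm_num
    linarith [hqmf (t/2)]
  rcases lt_or_ge t (3/7) with h4 | h4
  · -- t ∈ [2/7, 3/7) : everything vanishes
    rw [Set.indicator_of_mem (mem_per_of _ _ _ 0 (by push_cast; linarith) (by push_cast; linarith))]
    rw [Set.indicator_of_notMem (notMem_per_Ico (1/7) (3/14) _ (by linarith) (by linarith)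
      (by norm_num) (by norm_num) (by norm_num) (by norm_num)
      (by norm_num) (by norm_num) (by norm_num))]
    rw [Set.indicator_of_notMem (notMem_per_Ico (9/14) (5/7) _ (by linarith) (by linarith)
      (by norm_num) (by norm_num) (by norm_num) (by norm_num)
      (by norm_num) (by norm_num) (by norm_num))]
    rw [Set.indicator_of_notMem (notMem_per_Ico (9/14) (5/7) _ (by linarith) (by linarith)
      (by norm_num) (by norm_num) (by norm_num) (by norm_num)
      (by norm_num) (by norm_num) (by norm_num))]
    rw [Set.indicator_of_notMem ?nr]
    case nr =>
      rw [per_union, per_union]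
      rintro ((hm | hm) | hm)
      · exact notMem_per_Ico (2/7) (3/7) _ (by linarith) (by linarith)
          (by norm_num) (by norm_num) (by norm_num) (by norm_num)
          (by norm_num) (by norm_num) (by norm_num) hm
      · exact notMem_per_Ico (2/7) (3/7) _ (by linarith) (by linarith)
          (by norm_num) (by norm_num) (by norm_num) (by norm_num)
          (by norm_num) (by norm_num) (by norm_num) hm
      · exact notMem_per_Ico (2/7) (3/7) _ (by linarith) (by linarith)
          (by norm_num) (by norm_num) (by norm_num) (by norm_num)
          (by norm_num) (by norm_num) (by norm_num) hm
    have hp0 : p (t/2) = 0 := pz _ (Or.inl ⟨by linarith, by linarith⟩)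
    rw [hp0]
    norm_num
  · -- t ∈ [3/7, 1/2)
    rw [Set.indicator_of_mem (mem_per_of _ _ _ 0 (by push_cast; linarith) (by push_cast; linarith))]
    rw [Set.indicator_of_notMem (notMem_per_Ico (3/14) (1/4) _ (by linarith) (by linarith)
      (by norm_num) (by norm_num) (by norm_num) (by norm_num)
      (by norm_num) (by norm_num) (by norm_num))]
    rw [Set.indicator_of_mem (mem_per_of _ _ _ (-1) (by push_cast; linarith) (by push_cast; linarith))]
    rw [Set.indicator_of_notMem (notMem_per_Ico (5/7) (3/4) _ (by linarith) (by linarith)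
      (by norm_num) (by norm_num) (by norm_num) (by norm_num)
      (by norm_num) (by norm_num) (by norm_num))]
    rw [Set.indicator_of_mem (show t ∈ per (Set.Ico (-2/7 : ℝ) (2/7) ∪ Set.Ico (3/7 : ℝ) (1/2) ∪ Set.Ico (-1/2 : ℝ) (-3/7)) from ⟨0, Or.inl (Or.inr ⟨by push_cast; linarith, by push_cast; linarith⟩)⟩)]
    rw [show (t+1)/2 = t/2 + 1/2 by ring]
    simp only [Pi.one_apply]
    norm_num
    linarith [hqmf (t/2)]

/-- With `p` the smooth quadrature-mirror filter of the example,
the first row of the generalized orthonormality condition holds: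
`|h₁₁(x/2)|² + |h₁₂(x/2)|² + |h₁₁((x+1)/2)|² + |h₁₂((x+1)/2)|² = 2·χ_{S₁}(x)`,
where `S₁` is the 1-periodization of `[-2/7,2/7) ∪ ±[3/7,1/2)`. -/
theorem stmt8 (p : ℝ → ℝ)
    (hsm : ContDiff ℝ (⊤ : ℕ∞) p)
    (hper : ∀ x, p (x + 1) = p x)
    (heven : ∀ x, p (-x) = p x)
    (hqmf : ∀ x, p x ^ 2 + p (x + 1/2) ^ 2 = 2)
    (hvan : ∀ (n : ℕ), ∀ x ∈ Set.Icc (1/7 : ℝ) (3/14) ∪ Set.Icc (3/7 : ℝ) (1/2),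
      iteratedDeriv n p x = 0) :
    ∀ x : ℝ,
      (h11 p (x/2)) ^ 2 + (h12 p (x/2)) ^ 2 +
        (h11 p ((x+1)/2)) ^ 2 + (h12 p ((x+1)/2)) ^ 2
      = 2 * Set.indicator
          (per (Set.Ico (-2/7) (2/7) ∪ Set.Ico (3/7) (1/2) ∪ Set.Ico (-1/2) (-3/7))) 1 x := by
  have pz : ∀ x ∈ Set.Icc (1/7 : ℝ) (3/14) ∪ Set.Icc (3/7 : ℝ) (1/2), p x = 0 := by
    intro x hx
    simpa using hvan 0 x hx
  intro x
  set n : ℤ := ⌊x + 1/2⌋ with hn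
  have hfl1 : (n : ℝ) ≤ x + 1/2 := Int.floor_le _
  have hfl2 : x + 1/2 < n + 1 := Int.lt_floor_add_one _
  have ht1 : -(1:ℝ)/2 ≤ x - n := by linarith
  have ht2 : x - (n : ℝ) < 1/2 := by linarith
  have eF := (stmt8_per p hper).sub_int_mul_eq (x := x) n
  rw [mul_one] at eF
  have eR := (indicator_per_per (S := Set.Ico (-2/7 : ℝ) (2/7) ∪ Set.Ico (3/7 : ℝ) (1/2) ∪
      Set.Ico (-1/2 : ℝ) (-3/7)) (f := (1 : ℝ → ℝ)) (fun _ => rfl)).sub_int_mul_eq (x := x) n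
  rw [mul_one] at eR
  calc (h11 p (x/2)) ^ 2 + (h12 p (x/2)) ^ 2 +
        (h11 p ((x+1)/2)) ^ 2 + (h12 p ((x+1)/2)) ^ 2
      = (h11 p ((x - n)/2)) ^ 2 + (h12 p ((x - n)/2)) ^ 2 +
        (h11 p (((x - n)+1)/2)) ^ 2 + (h12 p (((x - n)+1)/2)) ^ 2 := eF.symm
    _ = 2 * Set.indicator
          (per (Set.Ico (-2/7) (2/7) ∪ Set.Ico (3/7) (1/2) ∪ Set.Ico (-1/2) (-3/7))) 1 (x - n) :=
        stmt8_key p hper heven hqmf pz (x - n) ht1 ht2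
    _ = _ := by rw [eR]
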